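/- Let H be a real Hilbert space, ω a strong symplectic form, and J0, J1 two ω-compatible complex structures. Then there exists A ∈ Sp(H, ω) with A J0 A⁻¹ = J1; i.e., the symplectic group acts transitively on the set of ω-compatible complex structures. -/

import Mathlib

/-- A strong symplectic form on a real Hilbert space. -/
structure IsStrongSymplectic {H : Type*} [NormedAddCommGroup H] [InnerProductSpace ℝ H]
    (ω : H →L[ℝ] H →L[ℝ] ℝ) : Prop where
  skew : ∀ v w : H, ω v w = - ω w v
  flat_bijective : Function.Bijective (fun v : H => (ω v : H →L[ℝ] ℝ))

/-- An `ω`-compatible complex structure. -/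
structure IsCompatibleCplxStr {H : Type*} [NormedAddCommGroup H] [InnerProductSpace ℝ H]
    (ω : H →L[ℝ] H →L[ℝ] ℝ) (J : H →L[ℝ] H) : Prop where
  square : J * J = -1
  symm : ∀ v w : H, ω v (J w) = ω w (J v)
  coercive : ∃ c : ℝ, 0 < c ∧ ∀ v : H, c * ‖v‖ ^ 2 ≤ ω v (J v)

/-!
With `g(v, w) = ω(v, J0 w)`, an inner product equivalent to the given one, `T = -J0 J1` satisfies
`g(T v, w) = ω(w, J1 v)`, so it is `g`-self-adjoint and coercive, and `J1² = -1` reads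
`T J0 T = J0`. Its positive square root `P` also satisfies `P J0 P = J0`, because `J0⁻¹ P J0` and
`P T⁻¹` are commuting positive square roots of `T⁻¹`. Then `A = P⁻¹` is symplectic, as
`ω(v, w) = -g(v, J0 w)`, and `A J0 = J0 P = J1 A`.

Square roots come from the iteration `Y ↦ (X + Y²) / 2`, a contraction for `‖X‖ < 1` whose fixed
point solves `(1 - Y)² = 1 - X`. One of them also makes `g` the given inner product: conjugate by
the square root of the Lax–Milgram operator of `g`.
-/

open Filter
open scoped InnerProductSpace

section BanachAlgebra

variable {A : Type*} [NormedRing A] [NormedAlgebra ℝ A]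

noncomputable def sqrtIter (X : A) : ℕ → A
  | 0 => 0
  | n + 1 => (2 : ℝ)⁻¹ • (X + sqrtIter X n * sqrtIter X n)

variable {X : A}

theorem norm_sqrtIter_le {t : ℝ} (ht : 0 ≤ t) (hX : ‖X‖ + t ^ 2 ≤ 2 * t) (n : ℕ) :
    ‖sqrtIter X n‖ ≤ t := by
  induction n with
  | zero => simpa [sqrtIter] using ht
  | succ n ih =>
    have hsq : ‖sqrtIter X n * sqrtIter X n‖ ≤ t ^ 2 := by
      calc _ ≤ ‖sqrtIter X n‖ * ‖sqrtIter X n‖ := norm_mul_le _ _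
        _ ≤ t ^ 2 := by nlinarith [norm_nonneg (sqrtIter X n)]
    calc ‖sqrtIter X (n + 1)‖ = 2⁻¹ * ‖X + sqrtIter X n * sqrtIter X n‖ := by
          rw [sqrtIter, norm_smul]; norm_num
      _ ≤ 2⁻¹ * (‖X‖ + t ^ 2) := by gcongr; exact (norm_add_le _ _).trans (by gcongr)
      _ ≤ t := by linarith

theorem norm_sqrtIter_succ_sub_le {t : ℝ} (ht : 0 ≤ t) (hX : ‖X‖ + t ^ 2 ≤ 2 * t) (n : ℕ) :
    ‖sqrtIter X (n + 1) - sqrtIter X n‖ ≤ ‖X‖ / 2 * t ^ n := by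
  induction n with
  | zero => simp [sqrtIter, norm_smul, div_eq_inv_mul]
  | succ n ih =>
    set Y₀ := sqrtIter X n
    set Y₁ := sqrtIter X (n + 1)
    have hdiff : sqrtIter X (n + 2) - Y₁ = (2 : ℝ)⁻¹ • (Y₁ * (Y₁ - Y₀) + (Y₁ - Y₀) * Y₀) := by
      simp only [sqrtIter, Y₁, Y₀, mul_sub, sub_mul, ← smul_sub]
      congr 1
      abel
    have h₀ := norm_sqrtIter_le ht hX n
    have h₁ := norm_sqrtIter_le ht hX (n + 1)
    rw [hdiff, norm_smul]
    calc ‖(2 : ℝ)⁻¹‖ * ‖Y₁ * (Y₁ - Y₀) + (Y₁ - Y₀) * Y₀‖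
        ≤ 2⁻¹ * (‖Y₁‖ * ‖Y₁ - Y₀‖ + ‖Y₁ - Y₀‖ * ‖Y₀‖) := by
          simp only [norm_inv, Real.norm_ofNat]
          gcongr
          exact (norm_add_le _ _).trans (add_le_add (norm_mul_le _ _) (norm_mul_le _ _))
      _ ≤ 2⁻¹ * (t * ‖Y₁ - Y₀‖ + ‖Y₁ - Y₀‖ * t) := by gcongr
      _ = t * ‖Y₁ - Y₀‖ := by ring
      _ ≤ t * (‖X‖ / 2 * t ^ n) := by gcongr
      _ = ‖X‖ / 2 * t ^ (n + 1) := by ring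

theorem commute_sqrtIter {C : A} (hC : Commute C X) (n : ℕ) : Commute C (sqrtIter X n) := by
  induction n with
  | zero => exact Commute.zero_right C
  | succ n ih => exact (hC.add_right (ih.mul_right ih)).smul_right _

theorem isSelfAdjoint_sqrtIter [StarRing A] [StarModule ℝ A] (hX : IsSelfAdjoint X) (n : ℕ) :
    IsSelfAdjoint (sqrtIter X n) := by
  induction n with
  | zero => exact IsSelfAdjoint.zero A
  | succ n ih =>
    exact (IsSelfAdjoint.all (2 : ℝ)⁻¹).smul (hX.add ((ih.commute_iff ih).mp (Commute.refl _)))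

theorem exists_mul_self_eq_of_norm_one_sub_lt_one [CompleteSpace A] [StarRing A]
    [StarModule ℝ A] [ContinuousStar A] {B : A} (hB : ‖1 - B‖ < 1) :
    ∃ Q : A, Q * Q = B ∧ ‖1 - Q‖ < 1 ∧ (∀ C, Commute C B → Commute C Q) ∧
      (IsSelfAdjoint B → IsSelfAdjoint Q) := by
  set X := 1 - B
  -- for `‖X‖ + t² ≤ 2t` the iterates stay in the ball of radius `t` and contract by `t`
  obtain ⟨t, ht0, ht1, htX⟩ : ∃ t : ℝ, 0 ≤ t ∧ t < 1 ∧ ‖X‖ + t ^ 2 ≤ 2 * t :=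
    ⟨(1 + ‖X‖) / 2, by positivity, by linarith, by nlinarith [norm_nonneg X]⟩
  have hcauchy : CauchySeq (sqrtIter X) := cauchySeq_of_le_geometric t (‖X‖ / 2) ht1 fun n => by
    rw [dist_comm, dist_eq_norm]; exact norm_sqrtIter_succ_sub_le ht0 htX n
  obtain ⟨Y, hY⟩ := cauchySeq_tendsto_of_complete hcauchy
  have hfix : Y = (2 : ℝ)⁻¹ • (X + Y * Y) := by
    refine tendsto_nhds_unique (hY.comp (tendsto_add_atTop_nat 1)) ?_
    exact ((by fun_prop : Continuous fun Z : A => (2 : ℝ)⁻¹ • (X + Z * Z)).tendsto Y).comp hY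
  have hYt : ‖Y‖ ≤ t := le_of_tendsto' hY.norm (norm_sqrtIter_le ht0 htX)
  refine ⟨1 - Y, ?_, by simpa using hYt.trans_lt ht1, fun C hC => ?_, fun hBsa => ?_⟩
  · have h2Y : (2 : ℝ) • Y = X + Y * Y := by
      conv_lhs => rw [hfix]
      rw [smul_smul]; norm_num
    calc (1 - Y) * (1 - Y) = 1 - (2 : ℝ) • Y + Y * Y := by rw [two_smul]; noncomm_ring
      _ = B := by rw [h2Y]; simp only [X]; abel
  · have hCY : Commute C Y :=
      (isClosed_eq (continuous_const.mul continuous_id) (continuous_id.mul continuous_const))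
        |>.mem_of_tendsto hY
          (Eventually.of_forall (commute_sqrtIter ((Commute.one_right C).sub_right hC)))
    exact (Commute.one_right C).sub_right hCY
  · have hYsa : IsSelfAdjoint Y := (isClosed_eq continuous_star continuous_id).mem_of_tendsto hY
      (Eventually.of_forall (isSelfAdjoint_sqrtIter ((IsSelfAdjoint.one A).sub hBsa)))
    exact (IsSelfAdjoint.one A).sub hYsa

end BanachAlgebra

section Hilbert

variable {E : Type*} [NormedAddCommGroup E] [InnerProductSpace ℝ E]

def IsCoerciveOp (T : E →L[ℝ] E) : Prop := ∃ c > 0, ∀ v, c * ‖v‖ ^ 2 ≤ ⟪T v, v⟫_ℝ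

theorem ContinuousLinearMap.norm_le_of_abs_inner_le {S : E →L[ℝ] E}
    (hS : (S : E →ₗ[ℝ] E).IsSymmetric) {r : ℝ} (hr : 0 ≤ r)
    (h : ∀ v, |⟪S v, v⟫_ℝ| ≤ r * ‖v‖ ^ 2) : ‖S‖ ≤ r := by
  rw [S.norm_eq_iSup_rayleighQuotient hS]
  refine ciSup_le fun v => ?_
  rcases eq_or_ne v 0 with rfl | hv
  · simpa using hr
  · have hv2 : 0 < ‖v‖ ^ 2 := by positivity
    rw [rayleighQuotient, reApplyInnerSelf, RCLike.re_to_real, abs_div, abs_of_pos hv2,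
      div_le_iff₀ hv2]
    exact h v

theorem isCoerciveOp_of_norm_one_sub_lt_one {Q : E →L[ℝ] E} (hQ : ‖1 - Q‖ < 1) :
    IsCoerciveOp Q := by
  refine ⟨1 - ‖1 - Q‖, by linarith, fun v => ?_⟩
  have h : ⟪(1 - Q) v, v⟫_ℝ ≤ ‖1 - Q‖ * ‖v‖ ^ 2 := by
    calc _ ≤ ‖(1 - Q) v‖ * ‖v‖ := real_inner_le_norm _ _
      _ ≤ ‖1 - Q‖ * ‖v‖ * ‖v‖ := by gcongr; exact (1 - Q).le_opNorm v
      _ = _ := by ring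
  have : ⟪(1 - Q) v, v⟫_ℝ = ‖v‖ ^ 2 - ⟪Q v, v⟫_ℝ := by
    simp [inner_sub_left]
  linarith

theorem eq_of_mul_self_eq {X Y : E →L[ℝ] E} (hXY : Commute X Y) (hX : IsCoerciveOp X)
    (hY : ∀ v, 0 ≤ ⟪Y v, v⟫_ℝ) (h : X * X = Y * Y) : X = Y := by
  obtain ⟨c, hc, hcX⟩ := hX
  -- `(X + Y) (X - Y) = X² - Y² = 0` and `X + Y` is coercive
  have hprod : (X + Y) * (X - Y) = 0 := by
    rw [add_mul, mul_sub, mul_sub, h, hXY.eq]; abel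
  ext v
  set d := (X - Y) v
  have hd : ⟪X d, d⟫_ℝ + ⟪Y d, d⟫_ℝ = 0 := by
    rw [← inner_add_left, ← add_apply, show (X + Y) d = ((X + Y) * (X - Y)) v
      from rfl, hprod]
    simp
  have : ‖d‖ ^ 2 ≤ 0 := by nlinarith [hcX d, hY d]
  simpa [d, sub_eq_zero] using this

theorem IsCoerciveOp.neg_mul_mul {J P : E →L[ℝ] E} (hP : IsCoerciveOp P) (hJ : J * J = -1)
    (hJinner : ∀ v w, ⟪J v, J w⟫_ℝ = ⟪v, w⟫_ℝ) : IsCoerciveOp (-(J * P * J)) := by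
  have hJskew (v w : E) : ⟪J v, w⟫_ℝ = -⟪v, J w⟫_ℝ := by
    rw [← hJinner v (J w), ← mul_apply_eq_comp J J, hJ]; simp
  have hJnorm (v : E) : ‖J v‖ = ‖v‖ := by
    simpa [real_inner_self_eq_norm_sq] using hJinner v v
  obtain ⟨c, hc, hcP⟩ := hP
  exact ⟨c, hc, fun v => by simpa [hJskew, hJnorm] using hcP (J v)⟩

variable [CompleteSpace E]

theorem IsCoerciveOp.exists_sqrt {T : E →L[ℝ] E} (hT : IsSelfAdjoint T) (hTc : IsCoerciveOp T) :
    ∃ P : E →L[ℝ] E, P * P = T ∧ IsSelfAdjoint P ∧ IsCoerciveOp P ∧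
      ∀ C, Commute C T → Commute C P := by
  obtain ⟨c, hc, hcT⟩ := hTc
  set M := ‖T‖ + c
  have hM : 0 < M := by positivity
  have hcM : c / M ≤ 1 := (div_le_one hM).mpr (by simp [M])
  -- `1 - T / M` has numerical range in `[0, 1 - c / M]`
  have hB : ‖1 - M⁻¹ • T‖ < 1 := by
    refine lt_of_le_of_lt (ContinuousLinearMap.norm_le_of_abs_inner_le ?_ (r := 1 - c / M)
      (by linarith) fun v => ?_) (by linarith [div_pos hc hM])
    · exact ((IsSelfAdjoint.one _).sub ((IsSelfAdjoint.all M⁻¹).smul hT)).isSymmetric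
    · have hupper : ⟪T v, v⟫_ℝ ≤ M * ‖v‖ ^ 2 := by
        calc _ ≤ ‖T v‖ * ‖v‖ := real_inner_le_norm _ _
          _ ≤ ‖T‖ * ‖v‖ * ‖v‖ := by gcongr; exact T.le_opNorm v
          _ ≤ M * ‖v‖ ^ 2 := by nlinarith [norm_nonneg v, sq_nonneg ‖v‖]
      have hexp : ⟪(1 - M⁻¹ • T) v, v⟫_ℝ = ‖v‖ ^ 2 - M⁻¹ * ⟪T v, v⟫_ℝ := by
        simp [inner_sub_left, inner_smul_left]
      rw [hexp, abs_le]
      have hMinv : 0 < M⁻¹ := inv_pos.mpr hM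
      constructor
      · nlinarith [mul_le_mul_of_nonneg_left hupper hMinv.le, inv_mul_cancel₀ hM.ne']
      · have : c / M * ‖v‖ ^ 2 ≤ M⁻¹ * ⟪T v, v⟫_ℝ := by
          rw [div_eq_inv_mul, mul_assoc]; exact mul_le_mul_of_nonneg_left (hcT v) hMinv.le
        linarith
  obtain ⟨Q, hQQ, hQ1, hQcomm, hQsa⟩ := exists_mul_self_eq_of_norm_one_sub_lt_one hB
  obtain ⟨c', hc', hc'Q⟩ := isCoerciveOp_of_norm_one_sub_lt_one hQ1
  refine ⟨√M • Q, ?_, (IsSelfAdjoint.all _).smul (hQsa ((IsSelfAdjoint.all M⁻¹).smul hT)),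
    ⟨√M * c', by positivity, fun v => ?_⟩, fun C hC => (hQcomm C (hC.smul_right M⁻¹)).smul_right _⟩
  · rw [smul_mul_smul, Real.mul_self_sqrt hM.le, hQQ, smul_smul, mul_inv_cancel₀ hM.ne', one_smul]
  · rw [smul_apply, real_inner_smul_left, mul_assoc]
    exact mul_le_mul_of_nonneg_left (hc'Q v) (Real.sqrt_nonneg M)

theorem exists_sqrt_mul_mul_eq {J T : E →L[ℝ] E} (hJ : J * J = -1)
    (hJinner : ∀ v w, ⟪J v, J w⟫_ℝ = ⟪v, w⟫_ℝ) (hT : IsSelfAdjoint T) (hTc : IsCoerciveOp T)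
    (hTJT : T * J * T = J) :
    ∃ P : E →L[ℝ] E, P * P = T ∧ IsSelfAdjoint P ∧ P * J * P = J := by
  obtain ⟨P, hPP, hPsa, hPc, hPcomm⟩ := hTc.exists_sqrt hT
  refine ⟨P, hPP, hPsa, ?_⟩
  have hJJ (v : E) : J (J v) = -v := by simpa using congr($hJ v)
  have hTJT' (v : E) : T (J (T v)) = J v := congr($hTJT v)
  -- `T⁻¹ = J⁻¹ T J`; `J⁻¹ P J` and `P T⁻¹` are commuting square roots of `T⁻¹`, hence equal
  set Ti := -(J * T * J)
  have hTTi : T * Ti = 1 := by ext v; simp [Ti, hTJT', hJJ]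
  have hTiT : Ti * T = 1 := by ext v; simp [Ti, hTJT', hJJ]
  let Tu : (E →L[ℝ] E)ˣ := ⟨T, Ti, hTTi, hTiT⟩
  have hTiP : Commute Ti P := hPcomm _ (Commute.units_inv_left (u := Tu) (Commute.refl _))
  have hTJ (v : E) : T (J v) = J (Ti v) := by simp [Ti, hJJ]
  have hTiJ (v : E) : Ti (J v) = J (T v) := by simp [Ti, hJJ]
  have hTiP' (v : E) : Ti (P v) = P (Ti v) := congr($hTiP.eq v)
  have hPPTi (v : E) : P (P (Ti v)) = v := by simpa [← hPP] using congr($hTTi v)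
  set C := -(J * P * J)
  have hCT : Commute C T := by
    ext v
    simp [C, hTJ, hTiP', hTiJ]
  have hCC : C * C = Ti := by
    ext v
    simp [C, Ti, hJJ, ← hPP]
  have hPTi_sq : (P * Ti) * (P * Ti) = Ti := by
    ext v
    simp [hTiP', hPPTi]
  have hCY : Commute C (P * Ti) := (hPcomm C hCT).mul_right (hCT.units_inv_right (u := Tu))
  have hPTi_nonneg (v : E) : 0 ≤ ⟪(P * Ti) v, v⟫_ℝ := by
    obtain ⟨c, hc, hcP⟩ := hPc
    have := hcP (P (Ti v))
    rw [hPPTi, real_inner_comm] at this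
    exact le_trans (by positivity) this
  have hCeq := eq_of_mul_self_eq hCY (hPc.neg_mul_mul hJ hJinner) hPTi_nonneg
    (hCC.trans hPTi_sq.symm)
  ext v
  have h := congr(J ($hCeq (P v)))
  simpa [C, hJJ, hTiP', hPPTi] using h

theorem exists_continuousLinearEquiv_inner_eq {G : E →L[ℝ] E →L[ℝ] ℝ}
    (hG_symm : ∀ v w, G v w = G w v) (hG : IsCoercive G) :
    ∃ e : E ≃L[ℝ] E, ∀ v w, ⟪e v, e w⟫_ℝ = G v w := by
  -- `G = ⟪L ·, ·⟫` by Lax–Milgram, and `e = √L`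
  set L := hG.continuousLinearEquivOfBilin
  have hL (v w : E) : ⟪L v, w⟫_ℝ = G v w := hG.continuousLinearEquivOfBilin_apply v w
  have hLsa : IsSelfAdjoint (L : E →L[ℝ] E) :=
    ContinuousLinearMap.isSelfAdjoint_iff_isSymmetric.mpr fun v w =>
      show ⟪L v, w⟫_ℝ = ⟪v, L w⟫_ℝ by rw [hL, hG_symm, ← hL, real_inner_comm]
  have hLc : IsCoerciveOp (L : E →L[ℝ] E) := by
    obtain ⟨c, hc, hcG⟩ := hG
    exact ⟨c, hc, fun v => by simpa [hL, sq, ← mul_assoc] using hcG v⟩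
  obtain ⟨P, hPP, hPsa, -, hPcomm⟩ := hLc.exists_sqrt hLsa
  have hLinv : Commute (L.symm : E →L[ℝ] E) L := by ext v; simp
  have hPLinv (v : E) : P (L.symm v) = L.symm (P v) := congr($((hPcomm _ hLinv).eq.symm) v)
  have hPPv (v : E) : P (P v) = L v := congr($hPP v)
  refine ⟨.equivOfInverse P ((L.symm : E →L[ℝ] E).comp P) (fun v => ?_) (fun v => ?_),
    fun v w => ?_⟩
  · simp [hPPv]
  · simp [← hPLinv, hPPv]
  · show ⟪P v, P w⟫_ℝ = G v w
    have hPsym : ⟪P (P v), w⟫_ℝ = ⟪P v, P w⟫_ℝ := hPsa.isSymmetric _ _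
    rw [← hPsym, hPPv, hL]

end Hilbert

section Symplectic

variable {E : Type*} [NormedAddCommGroup E] [InnerProductSpace ℝ E]

theorem IsCompatibleCplxStr.conj {F : Type*} [NormedAddCommGroup F] [InnerProductSpace ℝ F]
    {ω : E →L[ℝ] E →L[ℝ] ℝ} {J : E →L[ℝ] E} (h : IsCompatibleCplxStr ω J) (e : E ≃L[ℝ] F) :
    IsCompatibleCplxStr (ω.bilinearComp (e.symm : F →L[ℝ] E) (e.symm : F →L[ℝ] E))
      (e.conjContinuousAlgEquiv J) where
  square := by rw [← map_mul, h.square, map_neg, map_one]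
  symm v w := by simpa using h.symm (e.symm v) (e.symm w)
  coercive := by
    obtain ⟨c, hc, hcJ⟩ := h.coercive
    set K := ‖(e : E →L[ℝ] F)‖
    refine ⟨c / (K ^ 2 + 1), by positivity, fun v => ?_⟩
    have hv : ‖v‖ ≤ K * ‖e.symm v‖ := by
      simpa using (e : E →L[ℝ] F).le_opNorm (e.symm v)
    have hv2 : ‖v‖ ^ 2 ≤ (K ^ 2 + 1) * ‖e.symm v‖ ^ 2 := by
      nlinarith [norm_nonneg v, sq_nonneg ‖e.symm v‖]
    calc c / (K ^ 2 + 1) * ‖v‖ ^ 2 ≤ c * ‖e.symm v‖ ^ 2 := by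
          rw [div_mul_eq_mul_div, div_le_iff₀ (by positivity)]; nlinarith
      _ ≤ _ := by simpa using hcJ (e.symm v)

theorem IsCompatibleCplxStr.isCoercive {ω : E →L[ℝ] E →L[ℝ] ℝ} {J : E →L[ℝ] E}
    (h : IsCompatibleCplxStr ω J) : IsCoercive (ω.bilinearComp (.id ℝ E) J) := by
  obtain ⟨c, hc, hcJ⟩ := h.coercive
  exact ⟨c, hc, fun v => by rw [mul_assoc, ← sq]; exact hcJ v⟩

variable [CompleteSpace E]

theorem exists_symplectic_conj_of_inner_eq {ω : E →L[ℝ] E →L[ℝ] ℝ}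
    (hω : ∀ v w, ω v w = -ω w v) {J0 J1 : E →L[ℝ] E} (hJ0 : J0 * J0 = -1)
    (h1 : IsCompatibleCplxStr ω J1) (hinner : ∀ v w, ⟪v, w⟫_ℝ = ω v (J0 w)) :
    ∃ A : E ≃L[ℝ] E, (∀ v w, ω (A v) (A w) = ω v w) ∧ ∀ v, A (J0 v) = J1 (A v) := by
  have hJ0J0 (v : E) : J0 (J0 v) = -v := by simpa using congr($hJ0 v)
  have hJ1J1 (v : E) : J1 (J1 v) = -v := by simpa using congr($h1.square v)
  have hω_inner (v w : E) : ω v w = -⟪v, J0 w⟫_ℝ := by simp [hinner, hJ0J0]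
  have hJ0inner (v w : E) : ⟪J0 v, J0 w⟫_ℝ = ⟪v, w⟫_ℝ := by
    rw [hinner, hJ0J0, map_neg, ← hω, ← hinner, real_inner_comm]
  -- `T = J0⁻¹ J1` is the positive operator `ω(·, J1 ·)` in the metric `ω(·, J0 ·)`
  set T := -(J0 * J1)
  have hinner_J0 (v w : E) : ⟪J0 v, w⟫_ℝ = ω v w := by
    rw [hω_inner, ← hJ0inner v (J0 w), hJ0J0, inner_neg_right, neg_neg]
  have hT (v w : E) : ⟪T v, w⟫_ℝ = ω w (J1 v) := by
    simp only [T, neg_apply, mul_apply_eq_comp, inner_neg_left, hinner_J0]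
    rw [hω, neg_neg]
  have hTsa : IsSelfAdjoint T := ContinuousLinearMap.isSelfAdjoint_iff_isSymmetric.mpr
    fun v w => show ⟪T v, w⟫_ℝ = ⟪v, T w⟫_ℝ by rw [hT, real_inner_comm, hT, h1.symm]
  have hTc : IsCoerciveOp T := by
    obtain ⟨c, hc, hcJ⟩ := h1.coercive
    exact ⟨c, hc, fun v => (hT v v).symm ▸ hcJ v⟩
  have hTJT : T * J0 * T = J0 := by ext v; simp [T, hJ0J0, hJ1J1]
  obtain ⟨P, hPP, hPsa, hPJP⟩ := exists_sqrt_mul_mul_eq hJ0 hJ0inner hTsa hTc hTJT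
  have hPJPv (v : E) : P (J0 (P v)) = J0 v := congr($hPJP v)
  -- `J0⁻¹ P J0 = P⁻¹`
  let Pe : E ≃L[ℝ] E := .equivOfInverse P (-(J0 * P * J0)) (fun v => by simp [hPJPv, hJ0J0])
    (fun v => by simp [hPJPv, hJ0J0])
  have hPe (v : E) : P (Pe.symm v) = v := Pe.apply_symm_apply v
  have hPω (v w : E) : ω (P v) (P w) = ω v w := by
    have hPsym : ⟪P v, J0 (P w)⟫_ℝ = ⟪v, P (J0 (P w))⟫_ℝ := hPsa.isSymmetric _ _
    rw [hω_inner, hω_inner, hPsym, hPJPv]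
  have hPJ1 (v : E) : P (J1 v) = J0 (P v) := by
    have hJ1 : J1 v = J0 (P (P v)) := by rw [← mul_apply_eq_comp P P, hPP]; simp [T, hJ0J0]
    rw [hJ1, hPJPv]
  refine ⟨Pe.symm, fun v w => ?_, fun v => Pe.injective ?_⟩
  · rw [← hPω, hPe, hPe]
  · show Pe (Pe.symm (J0 v)) = P (J1 (Pe.symm v))
    rw [Pe.apply_symm_apply, hPJ1, hPe]

end Symplectic

theorem symplectic_group_transitive_on_compatible_general
    {H : Type*} [NormedAddCommGroup H] [InnerProductSpace ℝ H] [CompleteSpace H]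
    (ω : H →L[ℝ] H →L[ℝ] ℝ) (hω : IsStrongSymplectic ω)
    (J0 J1 : H →L[ℝ] H)
    (h0 : IsCompatibleCplxStr ω J0) (h1 : IsCompatibleCplxStr ω J1) :
    ∃ A : H ≃L[ℝ] H, (∀ v w : H, ω (A v) (A w) = ω v w) ∧
      ∀ v : H, A (J0 v) = J1 (A v) := by
  obtain ⟨e, he⟩ := exists_continuousLinearEquiv_inner_eq h0.symm h0.isCoercive
  obtain ⟨A, hAω, hAJ⟩ := exists_symplectic_conj_of_inner_eq
    (ω := ω.bilinearComp (e.symm : H →L[ℝ] H) (e.symm : H →L[ℝ] H)) (fun v w => hω.skew _ _)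
    (J0 := e.conjContinuousAlgEquiv J0) (h0.conj e).square (h1.conj e)
    (fun v w => by simpa using he (e.symm v) (e.symm w))
  refine ⟨e.trans (A.trans e.symm), fun v w => ?_, fun v => ?_⟩
  · simpa using hAω (e v) (e w)
  · simpa using congr(e.symm $(hAJ (e v)))

/-- the symplectic group of a strongly symplectic real Hilbert space acts
transitively on the set of `ω`-compatible complex structures: for any two compatible
`J0, J1` there is a bounded invertible symplectic transformation `A` with
`A J0 A⁻¹ = J1`. -/
theorem symplectic_group_transitive_on_compatible
    {H : Type*} [NormedAddCommGroup H] [InnerProductSpace ℝ H] [CompleteSpace H]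
    [TopologicalSpace.SeparableSpace H]
    (ω : H →L[ℝ] H →L[ℝ] ℝ) (hω : IsStrongSymplectic ω)
    (J0 J1 : H →L[ℝ] H)
    (h0 : IsCompatibleCplxStr ω J0) (h1 : IsCompatibleCplxStr ω J1) :
    ∃ A : H ≃L[ℝ] H, (∀ v w : H, ω (A v) (A w) = ω v w) ∧
      ∀ v : H, A (J0 v) = J1 (A v) :=
  symplectic_group_transitive_on_compatible_general ω hω J0 J1 h0 h1
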